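/- arXiv:1710.07141 — 2 statements merged into one kernel-verified Lean document; each statement's English description precedes it below -/
import Mathlib

section
/- Let k be a field of characteristic p > 2. In the algebra S = k⟨x,y⟩/(yx − xy − (1/2)x²), for all r, ℓ ≥ 0: y^r x^ℓ = ∑_{t=0}^{r} C(r,t) (1/2)^t [ℓ]^[t] x^{ℓ+t} y^{r−t}, where [ℓ]^[t] = ℓ(ℓ+1)···(ℓ+t−1) with [ℓ]^[0] = 1. -/
/-!
Left multiplication by `y` splits as `L_y = R_y + ad y` with `R_y` (right multiplication) and
`ad y = L_y - R_y` commuting, so the binomial theorem gives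
`y ^ r * a = ∑ C(r,t) (ad y)^t(a) y^(r-t)`. The relation makes `ad y` act on powers of `x` by
`x ^ m ↦ m c x ^ (m + 1)`, whence `(ad y)^t (x ^ ℓ) = c ^ t [ℓ]^[t] x ^ (ℓ + t)`.
-/

open Finset

section Commutator

variable {S : Type*} [Ring S]

theorem pow_mul_eq_sum_choose_iterate_commutator (y a : S) (r : ℕ) :
    y ^ r * a =
      ∑ t ∈ range (r + 1), r.choose t • ((fun b => y * b - b * y)^[t] a * y ^ (r - t)) := by
  set Ly := LinearMap.mulLeft ℤ y
  set Ry := LinearMap.mulRight ℤ y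
  have hcomm : Commute (Ly - Ry) Ry := (LinearMap.commute_mulLeft_right y y).sub_left
    (Commute.refl Ry)
  have hL : Ly = (Ly - Ry) + Ry := (sub_add_cancel Ly Ry).symm
  calc y ^ r * a = (Ly ^ r) a := by rw [LinearMap.pow_mulLeft, LinearMap.mulLeft_apply]
    _ = _ := by
      rw [hL, hcomm.add_pow, LinearMap.sum_apply]
      refine sum_congr rfl fun t _ => ?_
      have hδ : ⇑(Ly - Ry) = fun b => y * b - b * y := rfl
      rw [← (Nat.cast_commute _ _).eq, (hcomm.pow_pow t (r - t)).eq, Module.End.mul_apply,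
        Module.End.natCast_apply, Module.End.mul_apply, LinearMap.pow_mulRight,
        LinearMap.mulRight_apply, Module.End.pow_apply, hδ]

variable {R : Type*} [CommRing R] [Algebra R S] {x y : S} {c : R}

theorem mul_pow_eq_of_mul_eq (hrel : y * x = x * y + c • x ^ 2) (m : ℕ) :
    y * x ^ m = x ^ m * y + ((m : R) * c) • x ^ (m + 1) := by
  induction m with
  | zero => simp
  | succ m ih =>
    calc y * x ^ (m + 1) = (y * x ^ m) * x := by rw [pow_succ, mul_assoc]
      _ = x ^ (m + 1) * y + ((m + 1 : ℕ) * c : R) • x ^ (m + 2) := by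
        rw [ih, add_mul, mul_assoc, hrel, smul_mul_assoc, mul_add, mul_smul_comm, ← mul_assoc,
          ← pow_succ, ← pow_add, ← pow_succ, add_assoc, ← add_smul]
        push_cast
        ring_nf

theorem iterate_commutator_pow_of_mul_eq (hrel : y * x = x * y + c • x ^ 2) (ℓ t : ℕ) :
    (fun b => y * b - b * y)^[t] (x ^ ℓ) = (c ^ t * (ℓ.ascFactorial t : R)) • x ^ (ℓ + t) := by
  induction t with
  | zero => simp
  | succ t ih =>
    rw [Function.iterate_succ_apply', ih, mul_smul_comm, smul_mul_assoc, ← smul_sub,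
      mul_pow_eq_of_mul_eq hrel, add_sub_cancel_left, smul_smul, Nat.ascFactorial_succ,
      ← add_assoc]
    push_cast
    ring_nf

theorem pow_mul_pow_eq_sum_of_mul_eq (hrel : y * x = x * y + c • x ^ 2) (r ℓ : ℕ) :
    y ^ r * x ^ ℓ =
      ∑ t ∈ range (r + 1),
        ((r.choose t : R) * c ^ t * (ℓ.ascFactorial t : R)) • (x ^ (ℓ + t) * y ^ (r - t)) := by
  rw [pow_mul_eq_sum_choose_iterate_commutator]
  refine sum_congr rfl fun t _ => ?_
  rw [iterate_commutator_pow_of_mul_eq hrel, smul_mul_assoc, ← Nat.cast_smul_eq_nsmul R,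
    smul_smul, mul_assoc]

end Commutator

theorem stmt12_general (k : Type*) [Field k]
    (S : Type*) [Ring S] [Algebra k S] (x y : S)
    (hrel : y * x = x * y + (2 : k)⁻¹ • x ^ 2) (r ℓ : ℕ) :
    y ^ r * x ^ ℓ =
      ∑ t ∈ Finset.range (r + 1),
        ((r.choose t : k) * (2 : k)⁻¹ ^ t * (ℓ.ascFactorial t : k)) •
          (x ^ (ℓ + t) * y ^ (r - t)) :=
  pow_mul_pow_eq_sum_of_mul_eq hrel r ℓ

/-- In `S = k⟨x,y⟩/(yx − xy − (1/2)x²)`: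
`y^r x^ℓ = ∑_{t=0}^r C(r,t)(1/2)^t [ℓ]^[t] x^{ℓ+t} y^{r−t}`. -/
theorem stmt12 (k : Type*) [Field k] (p : ℕ) (hp : p.Prime) (hp2 : 2 < p) [CharP k p]
    (S : Type*) [Ring S] [Algebra k S] (x y : S)
    (hrel : y * x = x * y + (2 : k)⁻¹ • x ^ 2) (r ℓ : ℕ) :
    y ^ r * x ^ ℓ =
      ∑ t ∈ Finset.range (r + 1),
        ((r.choose t : k) * (2 : k)⁻¹ ^ t * (ℓ.ascFactorial t : k)) •
          (x ^ (ℓ + t) * y ^ (r - t)) :=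
  stmt12_general k S x y hrel r ℓ
end

section
/- Over a field k of characteristic p > 2, define for odd index the map τ_odd: (k[y]/(y^p)) ⊗ (k[x]/(x^p)) → (k[x]/(x^p)) ⊗ (k[y]/(y^p)) by τ_odd(y^r ⊗ x^ℓ) = ∑_{t=0}^{r} C(r,t)(1/2)^t [ℓ+1]^[t] x^{ℓ+t} ⊗ y^{r−t}. Then τ_odd is bijective with inverse x^ℓ ⊗ y^r ↦ ∑_{t=0}^{r} C(r,t)(−1/2)^t [ℓ+1]^[t] y^{r−t} ⊗ x^{ℓ+t}. -/
open TensorProduct Polynomial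

/-- The truncated polynomial ring `k[X]/(X^p)`. -/
abbrev TruncPoly (k : Type*) [Field k] (p : ℕ) : Type _ :=
  Polynomial k ⧸ Ideal.span {(Polynomial.X : Polynomial k) ^ p}

/-- The generator of the truncated polynomial ring. -/
noncomputable def tgen (k : Type*) [Field k] (p : ℕ) : TruncPoly k p :=
  Ideal.Quotient.mk _ Polynomial.X

/-!
Write `a_c(r, ℓ, t) = C(r,t) c^t [ℓ+1]^[t]` for the coefficients of the twist by `c`.
Twisting by `c` and then by `d` is twisting by `c + d`: in the composite, the coefficient of
`y^{r-u} ⊗ x^{ℓ+u}` is `∑_t a_c(r, ℓ, t) a_d(r-t, ℓ+t, u-t)`, and since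
`C(r,t) C(r-t,u-t) = C(r,u) C(u,t)` and `[ℓ+1]^[t] [ℓ+t+1]^[u-t] = [ℓ+1]^[u]`, the binomial
theorem turns this sum into `a_{c+d}(r, ℓ, u)`. Twisting by `0` is the identity, so the twists
by `1/2` and `-1/2` are mutually inverse. Terms with `x^m`, `m ≥ p`, vanish on both sides, which
is why the truncation does not interfere.
-/

open Finset

section Twist

variable {R : Type*} [CommRing R]

def twistCoeff (c : R) (r ℓ t : ℕ) : R :=
  r.choose t * c ^ t * (ℓ + 1).ascFactorial t

theorem sum_twistCoeff_mul_twistCoeff (c d : R) (r ℓ u : ℕ) :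
    ∑ t ∈ range (u + 1), twistCoeff c r ℓ t * twistCoeff d (r - t) (ℓ + t) (u - t) =
      twistCoeff (c + d) r ℓ u := by
  have term : ∀ t ∈ range (u + 1),
      twistCoeff c r ℓ t * twistCoeff d (r - t) (ℓ + t) (u - t) =
        (r.choose u * (ℓ + 1).ascFactorial u : R) * (c ^ t * d ^ (u - t) * u.choose t) := by
    intro t ht
    have htu : t ≤ u := Nat.lt_succ_iff.mp (mem_range.mp ht)
    have hchoose : r.choose t * (r - t).choose (u - t) = r.choose u * u.choose t :=
      (Nat.choose_mul htu).symm
    have hasc : (ℓ + 1).ascFactorial t * (ℓ + t + 1).ascFactorial (u - t) =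
        (ℓ + 1).ascFactorial u := by
      rw [add_right_comm, Nat.ascFactorial_mul_ascFactorial, Nat.add_sub_cancel' htu]
    calc _ = ((r.choose t * (r - t).choose (u - t) : ℕ) : R) *
          ((ℓ + 1).ascFactorial t * (ℓ + t + 1).ascFactorial (u - t) : ℕ) *
            (c ^ t * d ^ (u - t)) := by
          simp only [twistCoeff]; push_cast; ring
      _ = _ := by rw [hchoose, hasc]; push_cast; ring
  rw [sum_congr rfl term, ← mul_sum, ← add_pow, twistCoeff]
  ring

theorem sum_twistCoeff_zero_smul {M : Type*} [AddCommGroup M] [Module R M] (r ℓ : ℕ)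
    (v : ℕ → M) : ∑ u ∈ range (r + 1), twistCoeff (0 : R) r ℓ u • v u = v 0 := by
  rw [sum_range_succ']
  simp [twistCoeff]

variable {M N : Type*} [AddCommGroup M] [Module R M] [AddCommGroup N] [Module R N]

-- `e r ℓ` and `f r ℓ` stand for `y^r ⊗ x^ℓ` and `x^ℓ ⊗ y^r`, or the other way round, so that
-- this one lemma yields both composites `σ ∘ τ` and `τ ∘ σ`.
theorem twist_comp_twist {p : ℕ} {e : ℕ → ℕ → M} {f : ℕ → ℕ → N}
    (he : ∀ r ℓ, p ≤ ℓ → e r ℓ = 0) (hf : ∀ r ℓ, p ≤ ℓ → f r ℓ = 0)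
    {c d : R} {F : M →ₗ[R] N} {G : N →ₗ[R] M}
    (hF : ∀ r ℓ, r < p → ℓ < p →
      F (e r ℓ) = ∑ t ∈ range (r + 1), twistCoeff c r ℓ t • f (r - t) (ℓ + t))
    (hG : ∀ r ℓ, r < p → ℓ < p →
      G (f r ℓ) = ∑ t ∈ range (r + 1), twistCoeff d r ℓ t • e (r - t) (ℓ + t))
    {r ℓ : ℕ} (hr : r < p) (hℓ : ℓ < p) :
    G (F (e r ℓ)) = ∑ u ∈ range (r + 1), twistCoeff (c + d) r ℓ u • e (r - u) (ℓ + u) := by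
  have hG' : ∀ t ∈ range (r + 1), G (f (r - t) (ℓ + t)) =
      ∑ s ∈ range (r + 1 - t), twistCoeff d (r - t) (ℓ + t) s • e (r - t - s) (ℓ + t + s) := by
    intro t ht
    rw [show r + 1 - t = r - t + 1 by have := mem_range.mp ht; omega]
    rcases lt_or_ge (ℓ + t) p with hlt | hge
    · exact hG _ _ (by omega) hlt
    · rw [hf _ _ hge, map_zero]
      exact (sum_eq_zero fun s _ => by rw [he _ _ (by omega), smul_zero]).symm
  calc G (F (e r ℓ))
      = ∑ t ∈ range (r + 1), ∑ s ∈ range (r + 1 - t),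
          (twistCoeff c r ℓ t * twistCoeff d (r - t) (ℓ + t) s) • e (r - t - s) (ℓ + t + s) := by
        rw [hF r ℓ hr hℓ, map_sum]
        refine sum_congr rfl fun t ht => ?_
        rw [map_smul, hG' t ht, smul_sum]
        simp only [smul_smul]
    _ = ∑ u ∈ range (r + 1), ∑ t ∈ range (u + 1),
          (twistCoeff c r ℓ t * twistCoeff d (r - t) (ℓ + t) (u - t)) • e (r - u) (ℓ + u) := by
        rw [← sum_range_diag_flip]
        refine sum_congr rfl fun u _ => sum_congr rfl fun t ht => ?_
        have htu := mem_range.mp ht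
        rw [show r - t - (u - t) = r - u by omega, show ℓ + t + (u - t) = ℓ + u by omega]
    _ = _ := by simp only [← sum_smul, sum_twistCoeff_mul_twistCoeff]

end Twist

section TruncPoly

variable {k : Type*} [Field k] {p : ℕ}

theorem tgen_pow_eq_zero {m : ℕ} (hm : p ≤ m) : tgen k p ^ m = 0 := by
  rw [tgen, ← map_pow, Ideal.Quotient.eq_zero_iff_mem]
  exact Ideal.mem_span_singleton.mpr (pow_dvd_pow X hm)

theorem TruncPoly.tensor_ext {M : Type*} [AddCommGroup M] [Module k M]
    {f g : TruncPoly k p ⊗[k] TruncPoly k p →ₗ[k] M}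
    (h : ∀ i j, i < p → j < p →
      f ((tgen k p ^ i) ⊗ₜ (tgen k p ^ j)) = g ((tgen k p ^ i) ⊗ₜ (tgen k p ^ j))) : f = g := by
  let b := AdjoinRoot.powerBasis (K := k) (pow_ne_zero p (X_ne_zero : (X : k[X]) ≠ 0))
  have hdim : b.dim = p := natDegree_X_pow p
  refine (b.basis.tensorProduct b.basis).ext fun ij => ?_
  rw [Module.Basis.tensorProduct_apply, b.basis_eq_pow, b.basis_eq_pow]
  exact h ij.1 ij.2 (ij.1.isLt.trans_eq hdim) (ij.2.isLt.trans_eq hdim)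

end TruncPoly

theorem stmt14_general (k : Type*) [Field k] (p : ℕ)
    (τ : (TruncPoly k p) ⊗[k] (TruncPoly k p) →ₗ[k] (TruncPoly k p) ⊗[k] (TruncPoly k p))
    (σ : (TruncPoly k p) ⊗[k] (TruncPoly k p) →ₗ[k] (TruncPoly k p) ⊗[k] (TruncPoly k p))
    (hτ : ∀ r ℓ : ℕ, r < p → ℓ < p →
      τ (((tgen k p) ^ r) ⊗ₜ[k] ((tgen k p) ^ ℓ)) =
        ∑ t ∈ Finset.range (r + 1),
          ((r.choose t : k) * (2 : k)⁻¹ ^ t * ((ℓ + 1).ascFactorial t : k)) •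
            (((tgen k p) ^ (ℓ + t)) ⊗ₜ[k] ((tgen k p) ^ (r - t))))
    (hσ : ∀ ℓ r : ℕ, ℓ < p → r < p →
      σ (((tgen k p) ^ ℓ) ⊗ₜ[k] ((tgen k p) ^ r)) =
        ∑ t ∈ Finset.range (r + 1),
          ((r.choose t : k) * (-(2 : k)⁻¹) ^ t * ((ℓ + 1).ascFactorial t : k)) •
            (((tgen k p) ^ (r - t)) ⊗ₜ[k] ((tgen k p) ^ (ℓ + t)))) :
    Function.Bijective τ ∧ σ.comp τ = LinearMap.id ∧ τ.comp σ = LinearMap.id := by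
  set x := tgen k p
  have hyx : ∀ r ℓ, p ≤ ℓ → (x ^ r) ⊗ₜ[k] (x ^ ℓ) = 0 := fun r ℓ h => by
    rw [tgen_pow_eq_zero h, tmul_zero]
  have hxy : ∀ r ℓ, p ≤ ℓ → (x ^ ℓ) ⊗ₜ[k] (x ^ r) = 0 := fun r ℓ h => by
    rw [tgen_pow_eq_zero h, zero_tmul]
  have hστ : σ ∘ₗ τ = LinearMap.id := TruncPoly.tensor_ext fun r ℓ hr hℓ => by
    rw [LinearMap.comp_apply, twist_comp_twist hyx hxy hτ (fun r ℓ hr hℓ => hσ ℓ r hℓ hr) hr hℓ,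
      add_neg_cancel, sum_twistCoeff_zero_smul]
    rfl
  have hτσ : τ ∘ₗ σ = LinearMap.id := TruncPoly.tensor_ext fun ℓ r hℓ hr => by
    rw [LinearMap.comp_apply, twist_comp_twist hxy hyx (fun r ℓ hr hℓ => hσ ℓ r hℓ hr) hτ hr hℓ,
      neg_add_cancel, sum_twistCoeff_zero_smul]
    rfl
  exact ⟨Function.bijective_iff_has_inverse.mpr
    ⟨σ, LinearMap.congr_fun hστ, LinearMap.congr_fun hτσ⟩, hστ, hτσ⟩

/-- The odd-index twisting map
`τ_odd(y^r ⊗ x^ℓ) = ∑_t C(r,t)(1/2)^t [ℓ+1]^[t] x^{ℓ+t} ⊗ y^{r−t}` is bijective with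
inverse `x^ℓ ⊗ y^r ↦ ∑_t C(r,t)(−1/2)^t [ℓ+1]^[t] y^{r−t} ⊗ x^{ℓ+t}`. -/
theorem stmt14 (k : Type*) [Field k] (p : ℕ) (hp : p.Prime) (hp2 : 2 < p) [CharP k p]
    (τ : (TruncPoly k p) ⊗[k] (TruncPoly k p) →ₗ[k] (TruncPoly k p) ⊗[k] (TruncPoly k p))
    (σ : (TruncPoly k p) ⊗[k] (TruncPoly k p) →ₗ[k] (TruncPoly k p) ⊗[k] (TruncPoly k p))
    (hτ : ∀ r ℓ : ℕ, r < p → ℓ < p →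
      τ (((tgen k p) ^ r) ⊗ₜ[k] ((tgen k p) ^ ℓ)) =
        ∑ t ∈ Finset.range (r + 1),
          ((r.choose t : k) * (2 : k)⁻¹ ^ t * ((ℓ + 1).ascFactorial t : k)) •
            (((tgen k p) ^ (ℓ + t)) ⊗ₜ[k] ((tgen k p) ^ (r - t))))
    (hσ : ∀ ℓ r : ℕ, ℓ < p → r < p →
      σ (((tgen k p) ^ ℓ) ⊗ₜ[k] ((tgen k p) ^ r)) =
        ∑ t ∈ Finset.range (r + 1),
          ((r.choose t : k) * (-(2 : k)⁻¹) ^ t * ((ℓ + 1).ascFactorial t : k)) •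
            (((tgen k p) ^ (r - t)) ⊗ₜ[k] ((tgen k p) ^ (ℓ + t)))) :
    Function.Bijective τ ∧ σ.comp τ = LinearMap.id ∧ τ.comp σ = LinearMap.id :=
  stmt14_general k p τ σ hτ hσ
end
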